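/- Adequacy for the simply-typed λ-calculus in the Krivine machine: if Γ ⊢ t : A and σ is a substitution such that σ(x) ∈ |B| for every (x:B) ∈ Γ, then t[σ] ∈ |A|. -/

import Mathlib

/-- λ-terms in de Bruijn representation. -/
inductive Tm where
  | var : Nat → Tm
  | lam : Tm → Tm
  | app : Tm → Tm → Tm

/-- Shift free variables ≥ d by one. -/
def Tm.shift (d : Nat) : Tm → Tm
  | .var n => if n < d then .var n else .var (n + 1)
  | .lam t => .lam (t.shift (d + 1))
  | .app t u => .app (t.shift d) (u.shift d)

/-- Substitute `u` for variable `k` (capture-avoiding, de Bruijn). -/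
def Tm.subst (k : Nat) (u : Tm) : Tm → Tm
  | .var n => if n < k then .var n else if n = k then u else .var (n - 1)
  | .lam t => .lam (Tm.subst (k + 1) (u.shift 0) t)
  | .app t v => .app (Tm.subst k u t) (Tm.subst k u v)

/-- `t[u/x]` for the outermost variable. -/
def Tm.subst0 (t u : Tm) : Tm := Tm.subst 0 u t

/-- KAM contexts (stacks). -/
inductive Ctx where
  | star : Ctx
  | cons : Tm → Ctx → Ctx

/-- KAM machine configurations ⟨t | e⟩. -/
structure Machine where
  tm : Tm
  ctx : Ctx

/-- KAM machine reduction. -/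
inductive Step : Machine → Machine → Prop
  | app (t u : Tm) (e : Ctx) : Step ⟨.app t u, e⟩ ⟨t, .cons u e⟩
  | lam (t u : Tm) (e : Ctx) : Step ⟨.lam t, .cons u e⟩ ⟨t.subst0 u, e⟩


/-- Simultaneous (parallel) substitution. -/
def Tm.psubst (σ : Nat → Tm) : Tm → Tm
  | .var n => σ n
  | .lam t => .lam (Tm.psubst (fun n => match n with
      | 0 => .var 0
      | n + 1 => (σ n).shift 0) t)
  | .app t u => .app (Tm.psubst σ t) (Tm.psubst σ u)

/-- Simple types: a base type and function types. -/
inductive Ty where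
  | base : Ty
  | arrow : Ty → Ty → Ty

/-- Typing judgment of the simply-typed λ-calculus (de Bruijn contexts). -/
inductive HasTy : List Ty → Tm → Ty → Prop
  | var {Γ n A} : Γ[n]? = some A → HasTy Γ (.var n) A
  | lam {Γ t A B} : HasTy (A :: Γ) t B → HasTy Γ (.lam t) (.arrow A B)
  | app {Γ t u A B} : HasTy Γ t (.arrow A B) → HasTy Γ u A → HasTy Γ (.app t u) B

/-- Orthogonal of a set of terms. -/
def orthC (pole : Machine → Prop) (S : Set Tm) : Set Ctx := {e | ∀ t ∈ S, pole ⟨t, e⟩}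

/-- Orthogonal of a set of contexts. -/
def orthT (pole : Machine → Prop) (S : Set Ctx) : Set Tm := {t | ∀ e ∈ S, pole ⟨t, e⟩}

/-- Truth witnesses: |A→B| = { t | ∀ u ∈ |A|, ∀ e ∈ ‖B‖, ⟨t | u·e⟩ ∈ ⫫ },
with ‖B‖ = |B|⊥, and an arbitrary interpretation at the base type. -/
def tru (pole : Machine → Prop) (baseTru : Set Tm) : Ty → Set Tm
  | .base => baseTru
  | .arrow A B =>
      {t | ∀ u ∈ tru pole baseTru A, ∀ e ∈ orthC pole (tru pole baseTru B),
        pole ⟨t, .cons u e⟩}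

/-- Falsity witnesses: ‖A‖ = |A|⊥. -/
def fal (pole : Machine → Prop) (baseTru : Set Tm) (A : Ty) : Set Ctx :=
  orthC pole (tru pole baseTru A)

/-!
Induction on the typing derivation. Every `|A|` is closed under bi-orthogonality (for an arrow
type because `‖A → B‖` contains every stack `u · e` with `u ∈ |A|`, `e ∈ ‖B‖`), so in the
application case one `push` step of the machine reduces `⟨t u | e⟩` to `⟨t | u · e⟩`. In the
abstraction case one `grab` step turns `⟨λ t[up σ] | u · e⟩` into `⟨t[up σ][u/0] | e⟩`, and the
substitution lemma `t[up σ][u/0] = t[scons u σ]` makes the induction hypothesis applicable.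
-/

namespace Tm

theorem shift_shift_of_le (u : Tm) {d d' : Nat} (h : d' ≤ d) :
    (u.shift d').shift (d + 1) = (u.shift d).shift d' := by
  induction u generalizing d d' with
  | var n => grind [shift]
  | lam t ih => simp only [shift, ih (Nat.succ_le_succ h)]
  | app t v iht ihv => simp only [shift, iht h, ihv h]

theorem subst_shift_self (s u : Tm) (k : Nat) : subst k u (s.shift k) = s := by
  induction s generalizing k u with
  | var n => grind [shift, subst]
  | lam t ih => simp only [shift, subst, ih]
  | app t v iht ihv => simp only [shift, subst, iht, ihv]

theorem shift_subst_of_le (s u : Tm) {k d : Nat} (h : d ≤ k) :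
    (subst k u s).shift d = subst (k + 1) (u.shift d) (s.shift d) := by
  induction s generalizing k u d with
  | var n => grind [shift, subst]
  | lam t ih =>
    simp only [subst, shift, ih _ (Nat.succ_le_succ h), shift_shift_of_le u (Nat.zero_le d)]
  | app t v iht ihv => simp only [subst, shift, iht _ h, ihv _ h]

def up (σ : Nat → Tm) : Nat → Tm
  | 0 => .var 0
  | n + 1 => (σ n).shift 0

def scons (u : Tm) (σ : Nat → Tm) : Nat → Tm
  | 0 => u
  | n + 1 => σ n

theorem psubst_lam (σ : Nat → Tm) (t : Tm) : psubst σ (.lam t) = .lam (psubst (up σ) t) := rfl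

theorem subst_psubst (t : Tm) (σ : Nat → Tm) (k : Nat) (u : Tm) :
    subst k u (psubst σ t) = psubst (fun n => subst k u (σ n)) t := by
  induction t generalizing σ k u with
  | var n => rfl
  | lam t ih =>
    rw [psubst_lam, psubst_lam, subst, ih]
    congr 2
    funext n
    cases n with
    | zero => simp [up, subst]
    | succ n => exact (shift_subst_of_le (σ n) u (Nat.zero_le k)).symm
  | app t v iht ihv => simp only [psubst, subst, iht, ihv]

theorem subst0_psubst_up (t u : Tm) (σ : Nat → Tm) :
    (psubst (up σ) t).subst0 u = psubst (scons u σ) t := by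
  rw [subst0, subst_psubst]
  congr 1
  funext n
  cases n with
  | zero => simp [up, scons, subst]
  | succ n => exact subst_shift_self (σ n) u 0

end Tm

section Realizability

variable {pole : Machine → Prop} {baseTru : Set Tm}

theorem orthT_fal_subset_tru (hbase : orthT pole (orthC pole baseTru) ⊆ baseTru) :
    ∀ A, orthT pole (fal pole baseTru A) ⊆ tru pole baseTru A
  | .base => hbase
  | .arrow _ _ => fun _ ht _ hu _ he => ht (.cons _ _) fun _ hs => hs _ hu _ he

theorem lam_mem_tru_arrow (hpole : ∀ m m', Step m m' → pole m' → pole m) {A B : Ty} {t : Tm}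
    (ht : ∀ u ∈ tru pole baseTru A, t.subst0 u ∈ tru pole baseTru B) :
    .lam t ∈ tru pole baseTru (.arrow A B) :=
  fun u hu e he => hpole _ _ (.lam t u e) (he _ (ht u hu))

theorem app_mem_tru (hpole : ∀ m m', Step m m' → pole m' → pole m)
    (hbase : orthT pole (orthC pole baseTru) ⊆ baseTru) {A B : Ty} {t u : Tm}
    (ht : t ∈ tru pole baseTru (.arrow A B)) (hu : u ∈ tru pole baseTru A) :
    .app t u ∈ tru pole baseTru B :=
  orthT_fal_subset_tru hbase B fun e he => hpole _ _ (.app t u e) (ht u hu e he)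

end Realizability

/-- Adequacy: if Γ ⊢ t : A and σ(x) ∈ |B| for every (x:B) ∈ Γ, then t[σ] ∈ |A|. -/
theorem adequacy (pole : Machine → Prop)
    (hpole : ∀ m m', Step m m' → pole m' → pole m)
    (baseTru : Set Tm) (hbase : baseTru = orthT pole (orthC pole baseTru))
    {Γ : List Ty} {t : Tm} {A : Ty} (ht : HasTy Γ t A)
    (σ : Nat → Tm) (hσ : ∀ n B, Γ[n]? = some B → σ n ∈ tru pole baseTru B) :
    Tm.psubst σ t ∈ tru pole baseTru A := by
  induction ht generalizing σ with
  | var h => exact hσ _ _ h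
  | lam _ ih =>
    rw [Tm.psubst_lam]
    refine lam_mem_tru_arrow hpole fun u hu => ?_
    rw [Tm.subst0_psubst_up]
    refine ih _ fun n B' hB' => ?_
    cases n with
    | zero => exact Option.some.inj hB' ▸ hu
    | succ n => exact hσ n B' hB'
  | app _ _ iht ihu => exact app_mem_tru hpole hbase.superset (iht σ hσ) (ihu σ hσ)
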